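/- Suppose for each line (i,j) in a finite edge set E the complex flows satisfy S_ij + S_ji ≥ L_ij (componentwise in real and imaginary parts), where L_ij is a given complex constant, and for each node i the KCL balance S^g_i - S^d_i - c_i = Σ_{(i,j)∈E} S_ij + Σ_{(j,i)∈E} S_ji holds. Then Σ_{i∈N} S^g_i - Σ_{i∈N} S^d_i - Σ_{i∈N} c_i ≥ Σ_{(i,j)∈E} L_ij (componentwise). -/
import Mathlib


theorem copper_plate_relaxation {ι κ : Type*} [DecidableEq κ]
    (E : Finset ι) (N : Finset κ) (src tgt : ι → κ)
    (Sf St L : ι → ℂ) (Sg Sd c : κ → ℂ)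
    (hsrc : ∀ e ∈ E, src e ∈ N) (htgt : ∀ e ∈ E, tgt e ∈ N)
    (hloss : ∀ e ∈ E, (L e).re ≤ (Sf e + St e).re ∧ (L e).im ≤ (Sf e + St e).im)
    (hkcl : ∀ i ∈ N, Sg i - Sd i - c i =
      (∑ e ∈ E.filter (fun e => src e = i), Sf e) +
        ∑ e ∈ E.filter (fun e => tgt e = i), St e) :
    (∑ e ∈ E, L e).re ≤ (∑ i ∈ N, Sg i - ∑ i ∈ N, Sd i - ∑ i ∈ N, c i).re ∧
      (∑ e ∈ E, L e).im ≤ (∑ i ∈ N, Sg i - ∑ i ∈ N, Sd i - ∑ i ∈ N, c i).im := by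
  have key : ∑ i ∈ N, Sg i - ∑ i ∈ N, Sd i - ∑ i ∈ N, c i = ∑ e ∈ E, (Sf e + St e) := by
    rw [← Finset.sum_sub_distrib, ← Finset.sum_sub_distrib, Finset.sum_congr rfl hkcl,
      Finset.sum_add_distrib, Finset.sum_fiberwise_of_maps_to hsrc,
      Finset.sum_fiberwise_of_maps_to htgt, Finset.sum_add_distrib]
  rw [key]
  constructor
  · rw [Complex.re_sum, Complex.re_sum]
    exact Finset.sum_le_sum fun e he => (hloss e he).1
  · rw [Complex.im_sum, Complex.im_sum]
    exact Finset.sum_le_sum fun e he => (hloss e he).2
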